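/- arXiv:2402.14291 — 2 statements merged into one kernel-verified Lean document; each statement's English description precedes it below -/
import Mathlib

section
/- Let B1, B2 : ℝ³ → ℝ² be the linear maps B1(x1,x2,x3) = (x1,x2) and B2(x1,x2,x3) = (x2,x3). Then for every subspace V of ℝ³, dim(V) ≤ (3/2) · dim(B1(V) + B2(V)). -/
/-- The linear map `B1 : ℝ³ → ℝ²`, `(x₁,x₂,x₃) ↦ (x₁,x₂)`. -/
noncomputable def B1 : (Fin 3 → ℝ) →ₗ[ℝ] (Fin 2 → ℝ) :=
  LinearMap.pi fun j => LinearMap.proj (j.castSucc)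

/-- The linear map `B2 : ℝ³ → ℝ²`, `(x₁,x₂,x₃) ↦ (x₂,x₃)`. -/
noncomputable def B2 : (Fin 3 → ℝ) →ₗ[ℝ] (Fin 2 → ℝ) :=
  LinearMap.pi fun j => LinearMap.proj (j.succ)

lemma B1_apply' (x : Fin 3 → ℝ) (j : Fin 2) : B1 x j = x j.castSucc := rfl
lemma B2_apply' (x : Fin 3 → ℝ) (j : Fin 2) : B2 x j = x j.succ := rfl

/-- Rank–nullity dichotomy for the restriction of a map to a submodule. -/
lemma dichotomy_aux (V : Submodule ℝ (Fin 3 → ℝ)) (f : (Fin 3 → ℝ) →ₗ[ℝ] (Fin 2 → ℝ)) :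
    Module.finrank ℝ V ≤ Module.finrank ℝ (V.map f) ∨
      ∃ x ∈ V, x ≠ 0 ∧ f x = 0 := by
  by_cases h : LinearMap.ker (f.domRestrict V) = ⊥
  · left
    have := LinearMap.finrank_range_add_finrank_ker (f.domRestrict V)
    rw [h, LinearMap.range_domRestrict] at this
    simp at this
    omega
  · right
    obtain ⟨x, hx, hx0⟩ := Submodule.exists_mem_ne_zero_of_ne_bot h
    refine ⟨x.1, x.2, by simpa [Submodule.coe_eq_zero] using hx0, ?_⟩
    simpa using LinearMap.mem_ker.mp hx

/-- A vector of `ℝ²` is a combination of the two standard basis vectors. -/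
lemma mem_of_singles {W : Submodule ℝ (Fin 2 → ℝ)}
    (h0 : (Pi.single 0 1 : Fin 2 → ℝ) ∈ W) (h1 : (Pi.single 1 1 : Fin 2 → ℝ) ∈ W)
    (y : Fin 2 → ℝ) : y ∈ W := by
  have : y = y 0 • (Pi.single 0 1 : Fin 2 → ℝ) + y 1 • (Pi.single 1 1 : Fin 2 → ℝ) := by
    funext j
    fin_cases j <;> simp [Pi.single_apply]
  rw [this]
  exact W.add_mem (W.smul_mem _ h0) (W.smul_mem _ h1)

theorem dim_le_three_halves_dim_sum (V : Submodule ℝ (Fin 3 → ℝ)) :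
    (Module.finrank ℝ V : ℝ) ≤
      (3 / 2 : ℝ) * (Module.finrank ℝ ↥(V.map B1 ⊔ V.map B2) : ℝ) := by
  set W : Submodule ℝ (Fin 2 → ℝ) := V.map B1 ⊔ V.map B2 with hW
  suffices h : 2 * Module.finrank ℝ V ≤ 3 * Module.finrank ℝ W by
    have := (Nat.cast_le (α := ℝ)).2 h
    push_cast at this
    linarith
  have hV3 : Module.finrank ℝ V ≤ 3 := by
    have := Submodule.finrank_le V
    simpa using this
  have hW2 : Module.finrank ℝ W ≤ 2 := by
    have := Submodule.finrank_le W
    simpa using this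
  have hmono1 : Module.finrank ℝ (V.map B1) ≤ Module.finrank ℝ W :=
    Submodule.finrank_mono le_sup_left
  have hmono2 : Module.finrank ℝ (V.map B2) ≤ Module.finrank ℝ W :=
    Submodule.finrank_mono le_sup_right
  rcases Nat.lt_or_ge (Module.finrank ℝ V) 2 with hV | hV
  · -- dim V ≤ 1 : enough that dim W ≥ 1 when dim V = 1
    rcases Nat.eq_zero_or_pos (Module.finrank ℝ V) with h0 | h1
    · omega
    · -- V nontrivial, get nonzero v; one of B1 v, B2 v is nonzero
      have : Nontrivial V := Module.nontrivial_of_finrank_pos h1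
      obtain ⟨v, hvV, hv0⟩ := Submodule.exists_mem_ne_zero_of_ne_bot
        (Submodule.nontrivial_iff_ne_bot.mp this)
      have hne : B1 v ≠ 0 ∨ B2 v ≠ 0 := by
        by_contra hc
        push_neg at hc
        apply hv0
        funext j
        fin_cases j
        · have := congrFun hc.1 0; simpa [B1_apply'] using this
        · have := congrFun hc.1 1; simpa [B1_apply'] using this
        · have := congrFun hc.2 1; simpa [B2_apply'] using this
      have hWnt : W ≠ ⊥ := by
        intro hbot
        rcases hne with h | h
        · exact h (by
            have : B1 v ∈ W := le_sup_left (α := Submodule ℝ (Fin 2 → ℝ))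
              (Submodule.mem_map_of_mem hvV)
            simpa [hbot] using this)
        · exact h (by
            have : B2 v ∈ W := le_sup_right (α := Submodule ℝ (Fin 2 → ℝ))
              (Submodule.mem_map_of_mem hvV)
            simpa [hbot] using this)
      have : Nontrivial W := Submodule.nontrivial_iff_ne_bot.mpr hWnt
      have : 0 < Module.finrank ℝ W := Module.finrank_pos
      omega
  · -- dim V ≥ 2 : show dim W ≥ 2
    have hWge : 2 ≤ Module.finrank ℝ W := by
      rcases dichotomy_aux V B1 with h1 | ⟨x, hxV, hx0, hx⟩
      · omega
      rcases dichotomy_aux V B2 with h2 | ⟨y, hyV, hy0, hy⟩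
      · omega
      -- x ∈ ker B1 nonzero : x = x 2 • e₃ ; y ∈ ker B2 nonzero : y = y 0 • e₁
      have hx01 : x 0 = 0 ∧ x 1 = 0 :=
        ⟨by simpa [B1_apply'] using congrFun hx 0,
         by simpa [B1_apply'] using congrFun hx 1⟩
      have hy12 : y 1 = 0 ∧ y 2 = 0 :=
        ⟨by simpa [B2_apply'] using congrFun hy 0,
         by simpa [B2_apply'] using congrFun hy 1⟩
      have hx2 : x 2 ≠ 0 := by
        intro h
        apply hx0; funext j; fin_cases j
        · exact hx01.1
        · exact hx01.2
        · exact h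
      have hy0' : y 0 ≠ 0 := by
        intro h
        apply hy0; funext j; fin_cases j
        · exact h
        · exact hy12.1
        · exact hy12.2
      -- e₃ ∈ V and e₁ ∈ V
      have he3 : (Pi.single 2 1 : Fin 3 → ℝ) ∈ V := by
        have : (Pi.single 2 1 : Fin 3 → ℝ) = (x 2)⁻¹ • x := by
          funext j; fin_cases j <;>
            simp [Pi.single_apply, hx01.1, hx01.2, inv_mul_cancel₀ hx2]
        rw [this]; exact V.smul_mem _ hxV
      have he1 : (Pi.single 0 1 : Fin 3 → ℝ) ∈ V := by
        have : (Pi.single 0 1 : Fin 3 → ℝ) = (y 0)⁻¹ • y := by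
          funext j; fin_cases j <;>
            simp [Pi.single_apply, hy12.1, hy12.2, inv_mul_cancel₀ hy0']
        rw [this]; exact V.smul_mem _ hyV
      -- then both standard basis vectors of ℝ² live in W
      have hs0 : (Pi.single 0 1 : Fin 2 → ℝ) ∈ W := by
        have : B1 (Pi.single 0 1 : Fin 3 → ℝ) = (Pi.single 0 1 : Fin 2 → ℝ) := by
          funext j; fin_cases j <;> simp [B1_apply', Pi.single_apply]
        exact this ▸ le_sup_left (α := Submodule ℝ (Fin 2 → ℝ))
          (Submodule.mem_map_of_mem he1)
      have hs1 : (Pi.single 1 1 : Fin 2 → ℝ) ∈ W := by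
        have : B2 (Pi.single 2 1 : Fin 3 → ℝ) = (Pi.single 1 1 : Fin 2 → ℝ) := by
          funext j; fin_cases j <;> simp [B2_apply', Pi.single_apply]
        exact this ▸ le_sup_right (α := Submodule ℝ (Fin 2 → ℝ))
          (Submodule.mem_map_of_mem he3)
      have hWtop : W = ⊤ := by
        rw [eq_top_iff]; intro y _; exact mem_of_singles hs0 hs1 y
      rw [hWtop]
      simp [finrank_top]
    omega
end

section
/- There is no finite constant C such that ∫_{ℝ³} f(x1,x2) f(x2,x3) dx ≤ C · ‖f‖_{L^{4/3}(ℝ²)}² holds for all measurable f : ℝ² → [0,∞]. -/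
/-!
Take `f(x, y) = g(x) g(y)` with `g(x) = 1/x` on `(1, ∞)` and `0` elsewhere. For such a tensor
product the left side factors as `(∫ g) (∫ g²) (∫ g) = ∞`, since `g ∉ L¹`, while the right side is
`C (∫ g^{4/3})^{3/2} < ∞`, since `g ∈ L^{4/3}`.
-/

open MeasureTheory Set
open scoped ENNReal

theorem lintegral_prod_prod_chain_mul {α : Type*} [MeasurableSpace α] {μ : Measure α} [SFinite μ]
    {g h : α → ℝ≥0∞} (hg : Measurable g) (hh : Measurable h) :
    ∫⁻ x : α × α × α, g x.1 * h x.2.1 * (g x.2.1 * h x.2.2) ∂μ.prod (μ.prod μ) =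
      (∫⁻ x, g x ∂μ) * (∫⁻ x, h x * g x ∂μ) * ∫⁻ x, h x ∂μ := by
  have hinner : AEMeasurable (fun y : α × α => h y.1 * g y.1 * h y.2) (μ.prod μ) :=
    (((hh.mul hg).comp measurable_fst).mul (hh.comp measurable_snd)).aemeasurable
  calc ∫⁻ x : α × α × α, g x.1 * h x.2.1 * (g x.2.1 * h x.2.2) ∂μ.prod (μ.prod μ)
      = ∫⁻ x : α × α × α, g x.1 * (h x.2.1 * g x.2.1 * h x.2.2) ∂μ.prod (μ.prod μ) := by
        simp only [mul_assoc]
    _ = (∫⁻ x, g x ∂μ) * ∫⁻ y : α × α, h y.1 * g y.1 * h y.2 ∂μ.prod μ :=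
        lintegral_prod_mul hg.aemeasurable hinner
    _ = (∫⁻ x, g x ∂μ) * (∫⁻ x, h x * g x ∂μ) * ∫⁻ x, h x ∂μ := by
        rw [lintegral_prod_mul (f := fun x => h x * g x) (hh.mul hg).aemeasurable hh.aemeasurable,
          mul_assoc]

theorem lintegral_prod_mul_rpow {α β : Type*} [MeasurableSpace α] [MeasurableSpace β]
    {μ : Measure α} {ν : Measure β} [SFinite ν] {g : α → ℝ≥0∞} {k : β → ℝ≥0∞}
    (hg : Measurable g) (hk : Measurable k) {p : ℝ} (hp : 0 ≤ p) :
    ∫⁻ y : α × β, (g y.1 * k y.2) ^ p ∂μ.prod ν = (∫⁻ x, g x ^ p ∂μ) * ∫⁻ y, k y ^ p ∂ν := by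
  simp_rw [ENNReal.mul_rpow_of_nonneg _ _ hp]
  exact lintegral_prod_mul (hg.pow_const p).aemeasurable (hk.pow_const p).aemeasurable

theorem lintegral_Ioi_ofReal_rpow_of_lt {a c : ℝ} (ha : a < -1) (hc : 0 < c) :
    ∫⁻ x in Ioi c, ENNReal.ofReal (x ^ a) = ENNReal.ofReal (-c ^ (a + 1) / (a + 1)) := by
  rw [← integral_Ioi_rpow_of_lt ha hc, ofReal_integral_eq_lintegral_ofReal
    (integrableOn_Ioi_rpow_of_lt ha hc)]
  filter_upwards [ae_restrict_mem measurableSet_Ioi] with x hx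
  exact Real.rpow_nonneg (hc.trans hx).le a

theorem lintegral_Ioi_ofReal_inv_eq_top {c : ℝ} (hc : 0 < c) :
    ∫⁻ x in Ioi c, ENNReal.ofReal x⁻¹ = ⊤ := by
  by_contra hfin
  refine not_integrableOn_Ioi_inv ((lintegral_ofReal_ne_top_iff_integrable
    measurable_inv.aestronglyMeasurable ?_).mp hfin)
  filter_upwards [ae_restrict_mem measurableSet_Ioi] with x hx
  exact inv_nonneg.mpr (hc.trans hx).le

noncomputable def tailInv : ℝ → ℝ≥0∞ := (Ioi 1).indicator fun x => ENNReal.ofReal x⁻¹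

theorem measurable_tailInv : Measurable tailInv :=
  (ENNReal.measurable_ofReal.comp measurable_inv).indicator measurableSet_Ioi

theorem lintegral_tailInv_rpow {p : ℝ} (hp : 0 < p) :
    ∫⁻ x, tailInv x ^ p = ∫⁻ x in Ioi 1, ENNReal.ofReal (x ^ (-p)) := by
  rw [← lintegral_indicator measurableSet_Ioi]
  congr 1 with x
  by_cases hx : x ∈ Ioi (1 : ℝ)
  · have hx0 : (0 : ℝ) ≤ x := zero_le_one.trans (le_of_lt hx)
    simp [tailInv, hx, ENNReal.ofReal_rpow_of_nonneg (inv_nonneg.mpr hx0) hp.le,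
      Real.inv_rpow hx0, Real.rpow_neg hx0]
  · simp [tailInv, hx, ENNReal.zero_rpow_of_pos hp]

theorem lintegral_tailInv : ∫⁻ x, tailInv x = ⊤ := by
  simpa [Real.rpow_neg_one, lintegral_Ioi_ofReal_inv_eq_top] using
    lintegral_tailInv_rpow one_pos

theorem lintegral_tailInv_mul_self : ∫⁻ x, tailInv x * tailInv x = 1 := by
  have := (lintegral_tailInv_rpow two_pos).trans
    (lintegral_Ioi_ofReal_rpow_of_lt (by norm_num) one_pos)
  norm_num [← pow_two] at this ⊢
  exact this

theorem lintegral_tailInv_rpow_ne_top {p : ℝ} (hp : 1 < p) : ∫⁻ x, tailInv x ^ p ≠ ⊤ := by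
  rw [lintegral_tailInv_rpow (zero_lt_one.trans hp),
    lintegral_Ioi_ofReal_rpow_of_lt (by linarith) one_pos]
  exact ENNReal.ofReal_ne_top

theorem no_finite_constant :
    ¬ ∃ C : ℝ≥0∞, C ≠ ⊤ ∧
      ∀ f : ℝ × ℝ → ℝ≥0∞, Measurable f →
        (∫⁻ x : ℝ × ℝ × ℝ, f (x.1, x.2.1) * f (x.2.1, x.2.2)) ≤
          C * ((∫⁻ y : ℝ × ℝ, f y ^ ((4 : ℝ) / 3)) ^ ((3 : ℝ) / 4)) ^ 2 := by
  rintro ⟨C, hC, hbound⟩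
  have hf : Measurable fun y : ℝ × ℝ => tailInv y.1 * tailInv y.2 :=
    (measurable_tailInv.comp measurable_fst).mul (measurable_tailInv.comp measurable_snd)
  have hineq := hbound _ hf
  simp only at hineq
  rw [Measure.volume_eq_prod, Measure.volume_eq_prod,
    lintegral_prod_prod_chain_mul measurable_tailInv measurable_tailInv,
    lintegral_prod_mul_rpow measurable_tailInv measurable_tailInv (by norm_num),
    lintegral_tailInv, lintegral_tailInv_mul_self, mul_one, ENNReal.top_mul_top,
    top_le_iff] at hineq
  have hnorm := lintegral_tailInv_rpow_ne_top (p := 4 / 3) (by norm_num)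
  exact ENNReal.mul_ne_top hC (ENNReal.pow_ne_top (ENNReal.rpow_ne_top_of_nonneg (by norm_num)
    (ENNReal.mul_ne_top hnorm hnorm))) hineq
end
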